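/- Let D_{1̂}, D_{2̂}, D_{3̂}, D_{4̂} be positive real numbers such that: (i) 5·D_{t̂} ≤ 3·D_{k̂} + 3·D_{ĵ} + 2·D_{î} for all distinct i, j, k, t ∈ [4]; and (ii) D_{î} < D_{k̂} + D_{ĵ} for all distinct i, j, k ∈ [4]. Then there exists a positive-weighted graph 𝒢=(G,w) whose vertex set contains distinct vertices 1,2,3,4 (and possibly other vertices) such that D_{[4]∖{i}}(𝒢) = D_{î} for every i ∈ [4]. -/

import Mathlib

/-!
After permuting indices we may assume `D 0 ≥ D 1 ≥ D 2, D 3`. Take terminals `0, 1, 2, 3` and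
Steiner points `s₁, s₂, s₃` (`Sum.inr k` is `s_{k+1}`), where `s_k` is joined to every terminal
except `k` and every edge weighs `c t`, `t` its terminal. Solving the linear system gives
`c 0 = (D 2 + D 3 - D 0) / 2` and `c j = (D 0 + 2 D 1 + D 2 + D 3) / 4 - D j`; conditions (i) and
(ii) make these positive with `c 1 ≤ 2 c 0`, `c 1 ≤ c 2`, `c 1 ≤ c 3`. The stars at `s₁, s₂, s₃`
and the path `3 s₂ 1 s₃ 2` have the prescribed weights. Conversely, a connected subgraph containing
three terminals contains a vertex `v` joined to them by edge-disjoint paths, so it weighs at least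
`∑ ρ_j v` for any potentials `ρ_j` vanishing at the terminals and `1`-Lipschitz along the edges;
explicit such potentials with `∑_{j ≠ i} ρ_j ≥ D i` everywhere give the matching lower bound.
-/

open SimpleGraph Finset

/-- The total weight of a subgraph: the sum of the weights of its edges. -/
noncomputable def subgraphWeight {V : Type} [Fintype V] {G : SimpleGraph V}
    (w : Sym2 V → ℝ) (R : G.Subgraph) : ℝ :=
  ∑ e ∈ (Set.toFinite R.edgeSet).toFinset, w e

/-- `graphDist G w I` is the minimum of `subgraphWeight w R` over connected
subgraphs `R` of `G` whose vertex set contains `I`. -/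
noncomputable def graphDist {V : Type} [Fintype V] (G : SimpleGraph V)
    (w : Sym2 V → ℝ) (I : Set V) : ℝ :=
  sInf { x : ℝ | ∃ R : G.Subgraph, R.Connected ∧ I ⊆ R.verts ∧ subgraphWeight w R = x }

/-- A weight function is positive on a graph if every edge has positive weight. -/
def PosWeighted {V : Type} (G : SimpleGraph V) (w : Sym2 V → ℝ) : Prop :=
  ∀ e ∈ G.edgeSet, 0 < w e

section Potentials

variable {V : Type*} {G : SimpleGraph V} {w : Sym2 V → ℝ}

def EdgeLipschitz (G : SimpleGraph V) (w : Sym2 V → ℝ) (ρ : V → ℝ) : Prop :=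
  ∀ ⦃u v⦄, G.Adj u v → ρ v ≤ ρ u + w s(u, v)

lemma EdgeLipschitz.comap {W : Type*} {H : SimpleGraph W} {ρ : V → ℝ}
    (hρ : EdgeLipschitz G w ρ) (f : H →g G) :
    EdgeLipschitz H (w ∘ Sym2.map f) (ρ ∘ f) := fun _ _ h ↦ by
  simpa using hρ (f.map_adj h)

lemma EdgeLipschitz.le_add_sum_edges {ρ : V → ℝ} (hρ : EdgeLipschitz G w ρ) :
    ∀ {u v : V} (p : G.Walk u v), ρ v ≤ ρ u + (p.edges.map w).sum
  | _, _, .nil => by simp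
  | _, _, .cons h p => by
    have := hρ.le_add_sum_edges p
    have := hρ h
    simp only [Walk.edges_cons, List.map_cons, List.sum_cons]
    linarith

/-- Following a path until it first enters `S` costs only edges that leave `S`. -/
lemma EdgeLipschitz.exists_mem_le_add_sum [DecidableEq V] {ρ : V → ℝ}
    (hρ : EdgeLipschitz G w ρ) (S : Set V) :
    ∀ {u z : V} (p : G.Walk u z), p.IsPath → z ∈ S →
      ∃ v ∈ S, ∃ F : Finset (Sym2 V), (∀ e ∈ F, e ∈ p.edges ∧ ∃ x ∈ e, x ∉ S) ∧
        ρ v ≤ ρ u + ∑ e ∈ F, w e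
  | u, _, .nil, _, hz => ⟨u, hz, ∅, by simp, by simp⟩
  | u, _, .cons (v := b) h p, hp, hz => by
    by_cases hu : u ∈ S
    · exact ⟨u, hu, ∅, by simp, by simp⟩
    obtain ⟨v, hv, F, hF, hρv⟩ := hρ.exists_mem_le_add_sum S p hp.of_cons hz
    have hnotin : s(u, b) ∉ F := fun he ↦
      (List.nodup_cons.mp (Walk.edges_cons h p ▸ hp.edges_nodup)).1 (hF _ he).1
    refine ⟨v, hv, insert s(u, b) F, ?_, ?_⟩
    · simp only [Finset.mem_insert, Walk.edges_cons, List.mem_cons, forall_eq_or_imp]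
      exact ⟨⟨by simp, u, Sym2.mem_mk_left _ _, hu⟩,
        fun e he ↦ ⟨Or.inr (hF e he).1, (hF e he).2⟩⟩
    · rw [Finset.sum_insert hnotin]
      linarith [hρ h]

/-- Three-terminal Steiner bound: a median vertex `v` of the terminals is joined to them by
edge-disjoint paths, each costing at least the corresponding potential at `v`. -/
lemma SimpleGraph.Connected.exists_le_sum_of_edgeLipschitz (hG : G.Connected) (x : Fin 3 → V)
    (ρ : Fin 3 → V → ℝ) (hρ : ∀ k, EdgeLipschitz G w (ρ k)) (hx : ∀ k, ρ k (x k) = 0)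
    {d : ℝ} (hd : ∀ v, d ≤ ∑ k, ρ k v) :
    ∃ F : Finset (Sym2 V), ↑F ⊆ G.edgeSet ∧ d ≤ ∑ e ∈ F, w e := by
  classical
  let P := (hG.preconnected (x 0) (x 1)).some.bypass
  have hP : P.IsPath := Walk.bypass_isPath _
  let Q := (hG.preconnected (x 2) (x 0)).some.bypass
  obtain ⟨v, hv, F, hF, hρ₂⟩ := (hρ 2).exists_mem_le_add_sum {v | v ∈ P.support} Q
    (Walk.bypass_isPath _) P.start_mem_support
  have hρ₀ := (hρ 0).le_add_sum_edges (P.takeUntil v hv)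
  have hρ₁ := (hρ 1).le_add_sum_edges (P.dropUntil v hv).reverse
  rw [Walk.edges_reverse, List.map_reverse, List.sum_reverse] at hρ₁
  have hPsum : ∑ e ∈ P.edges.toFinset, w e =
      ((P.takeUntil v hv).edges.map w).sum + ((P.dropUntil v hv).edges.map w).sum := by
    rw [List.sum_toFinset _ hP.edges_nodup, ← List.sum_append, ← List.map_append,
      ← Walk.edges_append, P.take_spec hv]
  have hdisj : Disjoint P.edges.toFinset F := Finset.disjoint_right.mpr fun e he heP ↦ by
    obtain ⟨y, hy, hyP⟩ := (hF e he).2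
    exact hyP (Walk.mem_support_of_mem_edges (List.mem_toFinset.mp heP) hy)
  refine ⟨P.edges.toFinset ∪ F, ?_, ?_⟩
  · simp only [Finset.coe_union, Set.union_subset_iff]
    exact ⟨fun e he ↦ P.edges_subset_edgeSet (List.mem_toFinset.mp he),
      fun e he ↦ Q.edges_subset_edgeSet (hF e he).1⟩
  · rw [Finset.sum_union hdisj, hPsum]
    have hdv := hd v
    simp only [Fin.sum_univ_three, hx] at hdv hρ₀ hρ₁ hρ₂
    linarith

end Potentials

section SubgraphWeight

variable {V : Type} [Fintype V] {G : SimpleGraph V} {w : Sym2 V → ℝ}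

lemma sum_map_val_le_subgraphWeight (hw : ∀ e ∈ G.edgeSet, 0 ≤ w e) (R : G.Subgraph)
    {F : Finset (Sym2 R.verts)} (hF : ↑F ⊆ R.coe.edgeSet) :
    ∑ e ∈ F, w (e.map (↑)) ≤ subgraphWeight w R := by
  classical
  rw [← Finset.sum_image fun _ _ _ _ h ↦ Sym2.map.injective Subtype.val_injective h]
  refine Finset.sum_le_sum_of_subset_of_nonneg ?_ fun e he _ ↦
    hw e (R.edgeSet_subset (Set.Finite.mem_toFinset _ |>.mp he))
  intro _ he
  obtain ⟨e, heF, rfl⟩ := Finset.mem_image.mp he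
  have : e ∈ R.coe.edgeSet := hF heF
  rw [Subgraph.edgeSet_coe] at this
  exact (Set.Finite.mem_toFinset _).mpr this

lemma le_subgraphWeight_of_edgeLipschitz (hw : ∀ e ∈ G.edgeSet, 0 ≤ w e) {R : G.Subgraph}
    (hR : R.Connected) (x : Fin 3 → V) (hxR : ∀ k, x k ∈ R.verts) (ρ : Fin 3 → V → ℝ)
    (hρ : ∀ k, EdgeLipschitz G w (ρ k)) (hx : ∀ k, ρ k (x k) = 0) {d : ℝ}
    (hd : ∀ v, d ≤ ∑ k, ρ k v) : d ≤ subgraphWeight w R := by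
  obtain ⟨F, hF, hdF⟩ := hR.coe.exists_le_sum_of_edgeLipschitz (fun k ↦ ⟨x k, hxR k⟩)
    (fun k ↦ ρ k ∘ R.hom) (fun k ↦ (hρ k).comap R.hom) hx fun v ↦ hd v
  exact hdF.trans (sum_map_val_le_subgraphWeight hw R hF)

lemma subgraphWeight_subgraphOfAdj {u v : V} (h : G.Adj u v) :
    subgraphWeight w (G.subgraphOfAdj h) = w s(u, v) := by
  simp [subgraphWeight]

lemma subgraphWeight_sup_le (hw : ∀ e ∈ G.edgeSet, 0 ≤ w e) (R R' : G.Subgraph) :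
    subgraphWeight w (R ⊔ R') ≤ subgraphWeight w R + subgraphWeight w R' := by
  classical
  simp only [subgraphWeight, Subgraph.edgeSet_sup]
  rw [Set.Finite.toFinset_union (Set.toFinite _) (Set.toFinite _), ← Finset.sum_union_inter]
  refine le_add_of_nonneg_right (Finset.sum_nonneg fun e he ↦ hw e ?_)
  exact R.edgeSet_subset ((Set.Finite.mem_toFinset _).mp (Finset.mem_inter.mp he).1)

lemma subgraphWeight_toSubgraph_le (hw : ∀ e ∈ G.edgeSet, 0 ≤ w e) :
    ∀ {u v : V} (p : G.Walk u v), subgraphWeight w p.toSubgraph ≤ (p.edges.map w).sum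
  | _, _, .nil => by simp [subgraphWeight]
  | _, _, .cons h p => by
    simp only [Walk.toSubgraph, Walk.edges_cons, List.map_cons, List.sum_cons]
    grw [subgraphWeight_sup_le hw, subgraphWeight_subgraphOfAdj, subgraphWeight_toSubgraph_le hw p]

lemma graphDist_eq_of_forall_le {I : Set V} {d : ℝ} {R₀ : G.Subgraph} (hR₀ : R₀.Connected)
    (hI : I ⊆ R₀.verts) (hR₀d : subgraphWeight w R₀ ≤ d)
    (hd : ∀ R : G.Subgraph, R.Connected → I ⊆ R.verts → d ≤ subgraphWeight w R) :
    graphDist G w I = d := by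
  refine IsLeast.csInf_eq ⟨⟨R₀, hR₀, hI, le_antisymm hR₀d (hd R₀ hR₀ hI)⟩, ?_⟩
  rintro _ ⟨R, hR, hIR, rfl⟩
  exact hd R hR hIR

end SubgraphWeight

section SteinerGraph

open Sum

def steinerAdj : Fin 4 ⊕ Fin 3 → Fin 4 ⊕ Fin 3 → Prop
  | inl t, inr k | inr k, inl t => t ≠ k.succ
  | _, _ => False

def steinerGraph : SimpleGraph (Fin 4 ⊕ Fin 3) where
  Adj := steinerAdj
  symm := ⟨by rintro (_ | _) (_ | _) h <;> exact h⟩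
  loopless := ⟨by rintro (_ | _) h <;> exact h⟩

@[simp] lemma steinerGraph_adj_inl_inr {t : Fin 4} {k : Fin 3} :
    steinerGraph.Adj (inl t) (inr k) ↔ t ≠ k.succ := Iff.rfl

@[simp] lemma steinerGraph_adj_inr_inl {k : Fin 3} {t : Fin 4} :
    steinerGraph.Adj (inr k) (inl t) ↔ t ≠ k.succ := Iff.rfl

def steinerWeight (c : Fin 4 → ℝ) : Sym2 (Fin 4 ⊕ Fin 3) → ℝ :=
  Sym2.lift ⟨fun u v ↦ Sum.elim c 0 u + Sum.elim c 0 v, fun _ _ ↦ add_comm _ _⟩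

variable {c : Fin 4 → ℝ}

@[simp] lemma steinerWeight_mk (u v : Fin 4 ⊕ Fin 3) :
    steinerWeight c s(u, v) = Sum.elim c 0 u + Sum.elim c 0 v := rfl

lemma posWeighted_steinerWeight (hc : ∀ t, 0 < c t) :
    PosWeighted steinerGraph (steinerWeight c) := by
  intro e he
  induction e using Sym2.ind with | _ u v => ?_
  rcases u with t | k <;> rcases v with t' | k'
  all_goals first | exact he.elim | simp [hc]

-- The weighted distance from terminal `j`, lowered to `c j + c 1` at the Steiner point missing `j`.
def steinerPotential (c : Fin 4 → ℝ) (j : Fin 4) : Fin 4 ⊕ Fin 3 → ℝ :=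
  Sum.elim (fun t ↦ if t = j then 0 else c j + c t) fun k ↦ c j + if k.succ = j then c 1 else 0

lemma edgeLipschitz_steinerPotential (hc : ∀ t, 0 < c t) (h1 : ∀ t, c 1 ≤ 2 * c t) (j : Fin 4) :
    EdgeLipschitz steinerGraph (steinerWeight c) (steinerPotential c j) := by
  have := hc j; have := hc 1
  intro u v h
  rcases u with t | k <;> rcases v with t | k
  all_goals first
    | exact False.elim h
    | have := hc t; have := h1 t
      simp only [steinerPotential, steinerWeight_mk, elim_inl, elim_inr, Pi.zero_apply]
      split_ifs <;> subst_vars <;> first | exact absurd rfl h | linarith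

def steinerDist (c : Fin 4 → ℝ) : Fin 4 → ℝ :=
  ![2 * c 1 + c 2 + c 3, c 0 + c 2 + c 3, c 0 + c 1 + c 3, c 0 + c 1 + c 2]

lemma steinerDist_le_sum_steinerPotential (hc : ∀ t, 0 < c t) (h0 : c 1 ≤ 2 * c 0)
    (h2 : c 1 ≤ c 2) (h3 : c 1 ≤ c 3) (i : Fin 4) (v : Fin 4 ⊕ Fin 3) :
    steinerDist c i ≤ ∑ k, steinerPotential c (i.succAbove k) v := by
  have := hc 0; have := hc 1; have := hc 2; have := hc 3
  rcases v with t | k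
  · fin_cases i <;> fin_cases t <;>
      simp [steinerDist, steinerPotential, Fin.sum_univ_three, Fin.succAbove, Fin.lt_def]
        <;> linarith
  · fin_cases i <;> fin_cases k <;>
      simp [steinerDist, steinerPotential, Fin.sum_univ_three, Fin.succAbove, Fin.lt_def]
        <;> linarith

end SteinerGraph

section SteinerTrees

open Sum

variable {c : Fin 4 → ℝ}

def steinerPath : steinerGraph.Walk (inl 3) (inl 2) :=
  .cons (v := inr 1) (by simp) <| .cons (v := inl 1) (by simp) <|
    .cons (v := inr 2) (by simp) <| .cons (by simp) .nil

lemma steinerGraph_adj_succAbove (k m : Fin 3) :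
    steinerGraph.Adj (inr k) (inl (k.succ.succAbove m)) :=
  Fin.succAbove_ne _ _

def steinerStar (k : Fin 3) : steinerGraph.Subgraph :=
  steinerGraph.subgraphOfAdj (steinerGraph_adj_succAbove k 0) ⊔
    steinerGraph.subgraphOfAdj (steinerGraph_adj_succAbove k 1) ⊔
    steinerGraph.subgraphOfAdj (steinerGraph_adj_succAbove k 2)

lemma steinerStar_connected (k : Fin 3) : (steinerStar k).Connected := by
  refine Subgraph.connected_sup (Subgraph.connected_sup ?_ ?_ ⟨inr k, by simp⟩).preconnected ?_
    ⟨inr k, by simp⟩ <;> exact (Subgraph.subgraphOfAdj_connected _).preconnected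

lemma exists_steinerTree (hc : ∀ t, 0 < c t) (i : Fin 4) :
    ∃ R : steinerGraph.Subgraph, R.Connected ∧ inl '' {m | m ≠ i} ⊆ R.verts ∧
      subgraphWeight (steinerWeight c) R ≤ steinerDist c i := by
  have hw e he := (posWeighted_steinerWeight hc e he).le
  induction i using Fin.cases with
  | zero =>
    refine ⟨steinerPath.toSubgraph, steinerPath.toSubgraph_connected, ?_,
      (subgraphWeight_toSubgraph_le hw _).trans_eq ?_⟩
    · rintro _ ⟨m, hm, rfl⟩
      fin_cases m <;> simp_all [steinerPath]
    · simp [steinerPath, steinerDist]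
      ring
  | succ k =>
    refine ⟨steinerStar k, steinerStar_connected k, ?_, ?_⟩
    · rintro _ ⟨t, ht, rfl⟩
      obtain ⟨m, rfl⟩ := Fin.exists_succAbove_eq ht
      fin_cases m <;> simp [steinerStar]
    · grw [steinerStar, subgraphWeight_sup_le hw, subgraphWeight_sup_le hw]
      fin_cases k <;> simp [subgraphWeight_subgraphOfAdj, steinerDist, Fin.succAbove, Fin.lt_def]

end SteinerTrees

def IsRealizable (D : Fin 4 → ℝ) : Prop :=
  ∃ (V : Type) (inst : Fintype V) (G : SimpleGraph V) (w : Sym2 V → ℝ)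
    (ι : Fin 4 → V), PosWeighted G w ∧ Function.Injective ι ∧
    ∀ i : Fin 4, @graphDist V inst G w (ι '' {m | m ≠ i}) = D i

lemma IsRealizable.comp_perm {D : Fin 4 → ℝ} (hD : IsRealizable D) (σ : Equiv.Perm (Fin 4)) :
    IsRealizable (D ∘ σ) := by
  obtain ⟨V, inst, G, w, ι, hw, hι, hdist⟩ := hD
  refine ⟨V, inst, G, w, ι ∘ σ, hw, hι.comp σ.injective, fun i ↦ ?_⟩
  have : σ '' {m | m ≠ i} = {m | m ≠ σ i} := by
    simpa [Set.compl_def] using σ.image_compl {i}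
  rw [Set.image_comp, this]
  exact hdist (σ i)

lemma isRealizable_steinerDist {c : Fin 4 → ℝ} (hc : ∀ t, 0 < c t) (h0 : c 1 ≤ 2 * c 0)
    (h2 : c 1 ≤ c 2) (h3 : c 1 ≤ c 3) : IsRealizable (steinerDist c) := by
  have hw e he := (posWeighted_steinerWeight hc e he).le
  have h1 : ∀ t, c 1 ≤ 2 * c t := by
    intro t; fin_cases t <;> simp <;> linarith [hc 1, hc 2, hc 3]
  refine ⟨_, inferInstance, steinerGraph, steinerWeight c, Sum.inl,
    posWeighted_steinerWeight hc, Sum.inl_injective, fun i ↦ ?_⟩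
  obtain ⟨R₀, hR₀, hIR₀, hR₀d⟩ := exists_steinerTree hc i
  refine graphDist_eq_of_forall_le hR₀ hIR₀ hR₀d fun R hR hIR ↦ ?_
  refine le_subgraphWeight_of_edgeLipschitz hw hR (fun k ↦ .inl (i.succAbove k))
    (fun k ↦ hIR ⟨_, Fin.succAbove_ne i k, rfl⟩) (fun k ↦ steinerPotential c (i.succAbove k))
    (fun k ↦ edgeLipschitz_steinerPotential hc h1 _) (fun k ↦ by simp [steinerPotential])
    (steinerDist_le_sum_steinerPotential hc h0 h2 h3 i)

lemma isRealizable_of_antitone {D : Fin 4 → ℝ}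
    (h1 : ∀ i j k t : Fin 4, i ≠ j → i ≠ k → i ≠ t → j ≠ k → j ≠ t → k ≠ t →
      5 * D t ≤ 3 * D k + 3 * D j + 2 * D i)
    (h2 : ∀ i j k : Fin 4, i ≠ j → i ≠ k → j ≠ k → D i < D k + D j) (hD : Antitone D) :
    IsRealizable D := by
  set s := (D 0 + 2 * D 1 + D 2 + D 3) / 4
  -- the unique solution of `steinerDist c = D`
  let c : Fin 4 → ℝ := ![(D 2 + D 3 - D 0) / 2, s - D 1, s - D 2, s - D 3]
  have hDc : steinerDist c = D := by
    ext i; fin_cases i <;> simp [c, s, steinerDist] <;> ring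
  have h1230 := h1 1 2 3 0 (by decide) (by decide) (by decide) (by decide) (by decide) (by decide)
  have h023 := h2 0 2 3 (by decide) (by decide) (by decide)
  have h123 := h2 1 2 3 (by decide) (by decide) (by decide)
  have h203 := h2 2 0 3 (by decide) (by decide) (by decide)
  have h302 := h2 3 0 2 (by decide) (by decide) (by decide)
  have h10 := hD (show (0 : Fin 4) ≤ 1 by decide)
  have h21 := hD (show (1 : Fin 4) ≤ 2 by decide)
  have h31 := hD (show (1 : Fin 4) ≤ 3 by decide)
  rw [← hDc]
  refine isRealizable_steinerDist (fun t ↦ ?_) ?_ ?_ ?_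
  · fin_cases t <;> simp [c, s] <;> linarith
  all_goals simp [c, s]; linarith

theorem four_weights_exists_general (D : Fin 4 → ℝ)
    (h1 : ∀ i j k t : Fin 4, i ≠ j → i ≠ k → i ≠ t → j ≠ k → j ≠ t → k ≠ t →
      5 * D t ≤ 3 * D k + 3 * D j + 2 * D i)
    (h2 : ∀ i j k : Fin 4, i ≠ j → i ≠ k → j ≠ k → D i < D k + D j) :
    ∃ (V : Type) (inst : Fintype V) (G : SimpleGraph V) (w : Sym2 V → ℝ)
      (ι : Fin 4 → V), PosWeighted G w ∧ Function.Injective ι ∧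
      ∀ i : Fin 4, @graphDist V inst G w (ι '' {m | m ≠ i}) = D i := by
  let σ : Equiv.Perm (Fin 4) := Fin.revPerm.trans (Tuple.sort D)
  have hσ : Antitone (D ∘ σ) := (Tuple.monotone_sort D).comp_antitone Fin.rev_anti
  have hDσ : IsRealizable (D ∘ σ) := isRealizable_of_antitone
    (fun i j k t hij hik hit hjk hjt hkt ↦ h1 _ _ _ _ (σ.injective.ne hij) (σ.injective.ne hik)
      (σ.injective.ne hit) (σ.injective.ne hjk) (σ.injective.ne hjt) (σ.injective.ne hkt))
    (fun i j k hij hik hjk ↦ h2 _ _ _ (σ.injective.ne hij) (σ.injective.ne hik)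
      (σ.injective.ne hjk)) hσ
  have := hDσ.comp_perm σ.symm
  rwa [Function.comp_assoc, Equiv.self_comp_symm, Function.comp_id] at this

/-- Theorem 4.4, sufficiency: four positive reals satisfying (i) and (ii) are
the `3`-weights of a positive-weighted graph whose vertex set contains four
distinct vertices `1,2,3,4` (and possibly other vertices). -/
theorem four_weights_exists (D : Fin 4 → ℝ) (hD : ∀ i, 0 < D i)
    (h1 : ∀ i j k t : Fin 4, i ≠ j → i ≠ k → i ≠ t → j ≠ k → j ≠ t → k ≠ t →
      5 * D t ≤ 3 * D k + 3 * D j + 2 * D i)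
    (h2 : ∀ i j k : Fin 4, i ≠ j → i ≠ k → j ≠ k → D i < D k + D j) :
    ∃ (V : Type) (inst : Fintype V) (G : SimpleGraph V) (w : Sym2 V → ℝ)
      (ι : Fin 4 → V), PosWeighted G w ∧ Function.Injective ι ∧
      ∀ i : Fin 4, @graphDist V inst G w (ι '' {m | m ≠ i}) = D i :=
  four_weights_exists_general D h1 h2
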